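/- The hHLP operational semantics is complete for the hereditary Harrop fragment of IPL: if the sequent P ▷ G is derivable in NJ, where P is a program and G a goal, then P ⊢ G has a successful execution in the operational semantics. -/
import Mathlib


/-! ## hereditary Harrop fragment -/

inductive Atm : Type
  | bot : Atm
  | at_ : ℕ → Atm

mutual
  inductive Df : Type
    | atom : Atm → Df
    | imp : Gf → Atm → Df
    | and : Df → Df → Df
  inductive Gf : Type
    | atom : Atm → Gf
    | dimp : Df → Gf → Gf
    | and : Gf → Gf → Gf
    | or : Gf → Gf → Gf
end

noncomputable instance : DecidableEq Df := Classical.decEq _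
noncomputable instance : DecidableEq Atm := Classical.decEq _

/-- A program is a finite set of definite formulae. -/
abbrev Program := Finset Df

/-- `[P]` : closure of a program under decomposing conjunctions. -/
inductive InClos (P : Program) : Df → Prop
  | mem {d} : d ∈ P → InClos P d
  | andl {d₁ d₂} : InClos P (Df.and d₁ d₂) → InClos P d₁
  | andr {d₁ d₂} : InClos P (Df.and d₁ d₂) → InClos P d₂

/-- An interpretation: a monotone map from programs to sets of atoms. -/
structure Interp where
  val : Program → Set Atm
  mono : ∀ {P Q : Program}, P ⊆ Q → val P ⊆ val Q

/-- Pointwise order on interpretations. -/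
def Interp.le (I J : Interp) : Prop := ∀ P, I.val P ⊆ J.val P

/-- Satisfaction `I, P ⊨ G`. -/
def sat (I : Interp) : Program → Gf → Prop
  | P, Gf.atom a => a ∈ I.val P
  | P, Gf.dimp d g => sat I (insert d P) g
  | P, Gf.and g₁ g₂ => sat I P g₁ ∧ sat I P g₂
  | P, Gf.or g₁ g₂ => sat I P g₁ ∨ sat I P g₂

theorem InClos.mono' {P Q : Program} (h : P ⊆ Q) : ∀ {d}, InClos P d → InClos Q d := by
  intro d hd
  induction hd with
  | mem hm => exact InClos.mem (h hm)
  | andl _ ih => exact InClos.andl ih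
  | andr _ ih => exact InClos.andr ih

theorem sat_mono (I : Interp) : ∀ (g : Gf) {P Q : Program}, P ⊆ Q → sat I P g → sat I Q g
  | Gf.atom _, _, _, h, hs => I.mono h hs
  | Gf.dimp d g, _, _, h, hs => sat_mono I g (Finset.insert_subset_insert d h) hs
  | Gf.and g₁ g₂, _, _, h, hs => ⟨sat_mono I g₁ h hs.1, sat_mono I g₂ h hs.2⟩
  | Gf.or g₁ g₂, _, _, h, hs =>
      hs.elim (fun x => Or.inl (sat_mono I g₁ h x)) (fun x => Or.inr (sat_mono I g₂ h x))

/-- The raw unfolding operator. -/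
def Traw (I : Interp) (P : Program) : Set Atm :=
  {a | InClos P (Df.atom a)} ∪
  {a | ∃ g, InClos P (Df.imp g a) ∧ sat I P g} ∪
  {a | sat I P (Gf.atom Atm.bot)}

/-- `T` maps interpretations to interpretations. -/
def T (I : Interp) : Interp := by
  refine ⟨Traw I, ?_⟩
  intro P Q h a ha
  simp only [Traw, Set.mem_union, Set.mem_setOf_eq] at ha ⊢
  rcases ha with (h1 | ⟨g, hg, hs⟩) | h3
  · exact Or.inl (Or.inl (InClos.mono' h h1))
  · exact Or.inl (Or.inr ⟨g, InClos.mono' h hg, sat_mono I _ h hs⟩)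
  · exact Or.inr (sat_mono I _ h h3)

/-- The bottom interpretation. -/
def Ibot : Interp := ⟨fun _ => ∅, fun _ => Set.Subset.refl _⟩

/-- Iterates of `T` from the bottom interpretation. -/
def Tn : ℕ → Interp
  | 0 => Ibot
  | n + 1 => T (Tn n)

/-- `T^ω I_⊥`, the least fixed point of `T`. -/
def Tomega : Interp :=
  ⟨fun P => ⋃ n, (Tn n).val P, fun h => Set.iUnion_mono fun n => (Tn n).mono h⟩

/-- The pointwise supremum of a family of interpretations. -/
def chainSup (I : ℕ → Interp) : Interp :=
  ⟨fun P => ⋃ n, (I n).val P, fun h => Set.iUnion_mono fun n => (I n).mono h⟩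

/-- Operational semantics for hHLP. -/
inductive Exec : Program → Gf → Prop
  | inn {P a} : InClos P (Df.atom a) → Exec P (Gf.atom a)
  | clause {P g a} : InClos P (Df.imp g a) → Exec P g → Exec P (Gf.atom a)
  | efq {P g} : Exec P (Gf.atom Atm.bot) → Exec P g
  | orl {P g₁ g₂} : Exec P g₁ → Exec P (Gf.or g₁ g₂)
  | orr {P g₁ g₂} : Exec P g₂ → Exec P (Gf.or g₁ g₂)
  | and {P g₁ g₂} : Exec P g₁ → Exec P g₂ → Exec P (Gf.and g₁ g₂)
  | load {P d g} : Exec (insert d P) g → Exec P (Gf.dimp d g)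

/-! ## Formulae of IPL and natural deduction NJ -/

inductive Fml : Type
  | atom : ℕ → Fml
  | bot : Fml
  | and : Fml → Fml → Fml
  | or : Fml → Fml → Fml
  | imp : Fml → Fml → Fml

/-- Gentzen's natural deduction system NJ for IPL. -/
inductive NJ : Set Fml → Fml → Prop
  | ax {Γ φ} : φ ∈ Γ → NJ Γ φ
  | andI {Γ φ ψ} : NJ Γ φ → NJ Γ ψ → NJ Γ (Fml.and φ ψ)
  | andE1 {Γ φ ψ} : NJ Γ (Fml.and φ ψ) → NJ Γ φ
  | andE2 {Γ φ ψ} : NJ Γ (Fml.and φ ψ) → NJ Γ ψ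
  | orI1 {Γ φ ψ} : NJ Γ φ → NJ Γ (Fml.or φ ψ)
  | orI2 {Γ φ ψ} : NJ Γ ψ → NJ Γ (Fml.or φ ψ)
  | orE {Γ φ ψ χ} : NJ Γ (Fml.or φ ψ) → NJ (insert φ Γ) χ → NJ (insert ψ Γ) χ → NJ Γ χ
  | impI {Γ φ ψ} : NJ (insert φ Γ) ψ → NJ Γ (Fml.imp φ ψ)
  | impE {Γ φ ψ} : NJ Γ (Fml.imp φ ψ) → NJ Γ φ → NJ Γ ψ
  | botE {Γ φ} : NJ Γ Fml.bot → NJ Γ φ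

def Atm.toFml : Atm → Fml
  | Atm.bot => Fml.bot
  | Atm.at_ n => Fml.atom n

mutual
  def Df.toFml : Df → Fml
    | Df.atom a => a.toFml
    | Df.imp g a => Fml.imp g.toFml a.toFml
    | Df.and d₁ d₂ => Fml.and d₁.toFml d₂.toFml
  def Gf.toFml : Gf → Fml
    | Gf.atom a => a.toFml
    | Gf.dimp d g => Fml.imp d.toFml g.toFml
    | Gf.and g₁ g₂ => Fml.and g₁.toFml g₂.toFml
    | Gf.or g₁ g₂ => Fml.or g₁.toFml g₂.toFml
end

/-! ## Base-extension semantics -/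

/-- A (properly second-level) atomic rule: premisses are pairs of a finite set of
dischargeable atoms and an atomic conclusion; the conclusion is an atom. -/
structure ARule where
  prems : List (Finset ℕ × ℕ)
  concl : ℕ

/-- Derivability of an atom from a set of atoms in an atomic system. -/
inductive Deriv (B : Set ARule) : Set ℕ → ℕ → Prop
  | hyp {S p} : p ∈ S → Deriv B S p
  | app {S} {r : ARule} : r ∈ B →
      (∀ pr ∈ r.prems, Deriv B (S ∪ ↑pr.1) pr.2) → Deriv B S r.concl

/-- Sandqvist's support relation `⊩_B φ` (over the basis of all second-level
atomic systems). -/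
def Supp : Set ARule → Fml → Prop
  | B, Fml.atom n => Deriv B ∅ n
  | B, Fml.bot => ∀ n : ℕ, Deriv B ∅ n
  | B, Fml.and φ ψ => Supp B φ ∧ Supp B ψ
  | B, Fml.imp φ ψ => ∀ C, B ⊆ C → Supp C φ → Supp C ψ
  | B, Fml.or φ ψ => ∀ C, B ⊆ C → ∀ p : ℕ,
      (∀ D, C ⊆ D → Supp D φ → Deriv D ∅ p) →
      (∀ D, C ⊆ D → Supp D ψ → Deriv D ∅ p) → Deriv C ∅ p

/-- Support with open assumptions: `Γ ⊩_B φ`. -/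
def SuppCtx (B : Set ARule) (Γ : Set Fml) (φ : Fml) : Prop :=
  ∀ C, B ⊆ C → (∀ ψ ∈ Γ, Supp C ψ) → Supp C φ

/-! ## The bespoke base `N` -/

/-- Atoms occurring in a formula. -/
def atomsIn : Fml → Set ℕ
  | Fml.atom n => {n}
  | Fml.bot => ∅
  | Fml.and φ ψ => atomsIn φ ∪ atomsIn ψ
  | Fml.or φ ψ => atomsIn φ ∪ atomsIn ψ
  | Fml.imp φ ψ => atomsIn φ ∪ atomsIn ψ

/-- A flattening map `♭` is good for a set `S` of formulae if it is injective,
the identity on atoms, and assigns fresh atoms to non-atomic formulae of `S`. -/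
def FlatGood (fl : Fml → ℕ) (S : Set Fml) : Prop :=
  Function.Injective fl ∧ (∀ n, fl (Fml.atom n) = n) ∧
  (∀ φ ∈ S, (∀ n, φ ≠ Fml.atom n) → ∀ ψ ∈ S, fl φ ∉ atomsIn ψ)

/-- `S` is closed under subformulae. -/
def SubClosed (S : Set Fml) : Prop :=
  (∀ φ ψ, Fml.and φ ψ ∈ S → φ ∈ S ∧ ψ ∈ S) ∧
  (∀ φ ψ, Fml.or φ ψ ∈ S → φ ∈ S ∧ ψ ∈ S) ∧
  (∀ φ ψ, Fml.imp φ ψ ∈ S → φ ∈ S ∧ ψ ∈ S)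

/-- The rules of the bespoke base `N` emulating NJ via flattened atoms, for the
formulae occurring in `S`. -/
inductive NRule (fl : Fml → ℕ) (S : Set Fml) : ARule → Prop
  | andI {φ ψ} : Fml.and φ ψ ∈ S →
      NRule fl S ⟨[(∅, fl φ), (∅, fl ψ)], fl (Fml.and φ ψ)⟩
  | andE1 {φ ψ} : Fml.and φ ψ ∈ S →
      NRule fl S ⟨[(∅, fl (Fml.and φ ψ))], fl φ⟩
  | andE2 {φ ψ} : Fml.and φ ψ ∈ S →
      NRule fl S ⟨[(∅, fl (Fml.and φ ψ))], fl ψ⟩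
  | orI1 {φ ψ} : Fml.or φ ψ ∈ S →
      NRule fl S ⟨[(∅, fl φ)], fl (Fml.or φ ψ)⟩
  | orI2 {φ ψ} : Fml.or φ ψ ∈ S →
      NRule fl S ⟨[(∅, fl ψ)], fl (Fml.or φ ψ)⟩
  | orE {φ ψ χ} : Fml.or φ ψ ∈ S → χ ∈ S →
      NRule fl S ⟨[(∅, fl (Fml.or φ ψ)), ({fl φ}, fl χ), ({fl ψ}, fl χ)], fl χ⟩
  | impI {φ ψ} : Fml.imp φ ψ ∈ S →
      NRule fl S ⟨[({fl φ}, fl ψ)], fl (Fml.imp φ ψ)⟩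
  | impE {φ ψ} : Fml.imp φ ψ ∈ S →
      NRule fl S ⟨[(∅, fl φ), (∅, fl (Fml.imp φ ψ))], fl ψ⟩
  | botE {φ} : φ ∈ S →
      NRule fl S ⟨[(∅, fl Fml.bot)], fl φ⟩

/-! ## Encoding atomic systems as formulae / programs -/

def conjAtoms : ℕ → List ℕ → Fml
  | a, [] => Fml.atom a
  | a, b :: l => Fml.and (Fml.atom a) (conjAtoms b l)

noncomputable def encPrem (pr : Finset ℕ × ℕ) : Fml :=
  match pr.1.toList with
  | [] => Fml.atom pr.2
  | a :: l => Fml.imp (conjAtoms a l) (Fml.atom pr.2)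

def conjFrm : Fml → List Fml → Fml
  | f, [] => f
  | f, g :: l => Fml.and f (conjFrm g l)

/-- Encoding `⌊-⌋` of a second-level atomic rule as a formula of IPL. -/
noncomputable def encRule (r : ARule) : Fml :=
  match r.prems with
  | [] => Fml.atom r.concl
  | q :: qs => Fml.imp (conjFrm (encPrem q) (qs.map encPrem)) (Fml.atom r.concl)

def conjD : Df → List Df → Df
  | d, [] => d
  | d, e :: l => Df.and d (conjD e l)

def conjG : Gf → List Gf → Gf
  | g, [] => g
  | g, h :: l => Gf.and g (conjG h l)

noncomputable def encPremG (pr : Finset ℕ × ℕ) : Gf :=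
  match pr.1.toList with
  | [] => Gf.atom (Atm.at_ pr.2)
  | a :: l =>
      Gf.dimp (conjD (Df.atom (Atm.at_ a)) (l.map fun n => Df.atom (Atm.at_ n)))
        (Gf.atom (Atm.at_ pr.2))

/-- Encoding of a second-level atomic rule as a definite formula. -/
noncomputable def encRuleD (r : ARule) : Df :=
  match r.prems with
  | [] => Df.atom (Atm.at_ r.concl)
  | q :: qs => Df.imp (conjG (encPremG q) (qs.map encPremG)) (Atm.at_ r.concl)
/-! ## Auxiliary: Kripke forcing over programs -/

theorem Exec.mono {P Q : Program} (h : P ⊆ Q) {g : Gf} (he : Exec P g) : Exec Q g := by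
  induction he generalizing Q with
  | inn hc => exact Exec.inn (InClos.mono' h hc)
  | clause hc _ ih => exact Exec.clause (InClos.mono' h hc) (ih h)
  | efq _ ih => exact Exec.efq (ih h)
  | orl _ ih => exact Exec.orl (ih h)
  | orr _ ih => exact Exec.orr (ih h)
  | and _ _ ih1 ih2 => exact Exec.and (ih1 h) (ih2 h)
  | load _ ih => exact Exec.load (ih (Finset.insert_subset_insert _ h))

def Force : Program → Fml → Prop
  | P, Fml.atom n => Exec P (Gf.atom (Atm.at_ n))
  | P, Fml.bot => Exec P (Gf.atom Atm.bot)
  | P, Fml.and φ ψ => Force P φ ∧ Force P ψ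
  | P, Fml.or φ ψ => Force P φ ∨ Force P ψ
  | P, Fml.imp φ ψ => ∀ Q, P ⊆ Q → Force Q φ → Force Q ψ

theorem Force.mono : ∀ (φ : Fml) {P Q : Program}, P ⊆ Q → Force P φ → Force Q φ
  | Fml.atom _, _, _, h, hf => Exec.mono h hf
  | Fml.bot, _, _, h, hf => Exec.mono h hf
  | Fml.and φ ψ, _, _, h, hf => ⟨Force.mono φ h hf.1, Force.mono ψ h hf.2⟩
  | Fml.or φ ψ, _, _, h, hf =>
      hf.elim (fun x => Or.inl (Force.mono φ h x)) (fun x => Or.inr (Force.mono ψ h x))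
  | Fml.imp _ _, _, _, h, hf => fun R hR hφ => hf R (h.trans hR) hφ

theorem Force.ofBot : ∀ (φ : Fml) {P : Program}, Exec P (Gf.atom Atm.bot) → Force P φ
  | Fml.atom _, _, h => Exec.efq h
  | Fml.bot, _, h => h
  | Fml.and φ ψ, _, h => ⟨Force.ofBot φ h, Force.ofBot ψ h⟩
  | Fml.or φ _, _, h => Or.inl (Force.ofBot φ h)
  | Fml.imp _ ψ, _, h => fun Q hQ _ => Force.ofBot ψ (Exec.mono hQ h)

theorem NJ_sound {Γ : Set Fml} {φ : Fml} (h : NJ Γ φ) :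
    ∀ P : Program, (∀ γ ∈ Γ, Force P γ) → Force P φ := by
  induction h with
  | ax hm => exact fun P hΓ => hΓ _ hm
  | andI _ _ ih1 ih2 => exact fun P hΓ => ⟨ih1 P hΓ, ih2 P hΓ⟩
  | andE1 _ ih => exact fun P hΓ => (ih P hΓ).1
  | andE2 _ ih => exact fun P hΓ => (ih P hΓ).2
  | orI1 _ ih => exact fun P hΓ => Or.inl (ih P hΓ)
  | orI2 _ ih => exact fun P hΓ => Or.inr (ih P hΓ)
  | orE _ _ _ ih ih1 ih2 =>
      intro P hΓ
      rcases ih P hΓ with hl | hr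
      · exact ih1 P (fun γ hγ => hγ.elim (fun e => e ▸ hl) (hΓ γ))
      · exact ih2 P (fun γ hγ => hγ.elim (fun e => e ▸ hr) (hΓ γ))
  | impI _ ih =>
      intro P hΓ Q hQ hφ
      exact ih Q (fun γ hγ => hγ.elim (fun e => e ▸ hφ)
        (fun hg => Force.mono γ hQ (hΓ γ hg)))
  | impE _ _ ih1 ih2 =>
      exact fun P hΓ => ih1 P hΓ P (Finset.Subset.refl _) (ih2 P hΓ)
  | botE _ ih => exact fun P hΓ => Force.ofBot _ (ih P hΓ)

mutual
  theorem Force_toFml_exec : ∀ (g : Gf) {P : Program}, Force P g.toFml → Exec P g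
    | Gf.atom Atm.bot, _, h => h
    | Gf.atom (Atm.at_ _), _, h => h
    | Gf.dimp d g, P, h =>
        Exec.load (Force_toFml_exec g
          (h (insert d P) (Finset.subset_insert _ _)
            (inClos_force d (InClos.mem (Finset.mem_insert_self _ _)))))
    | Gf.and g₁ g₂, _, h => Exec.and (Force_toFml_exec g₁ h.1) (Force_toFml_exec g₂ h.2)
    | Gf.or g₁ g₂, _, h =>
        h.elim (fun x => Exec.orl (Force_toFml_exec g₁ x))
          (fun x => Exec.orr (Force_toFml_exec g₂ x))

  theorem inClos_force : ∀ (d : Df) {P : Program}, InClos P d → Force P d.toFml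
    | Df.atom Atm.bot, _, h => Exec.inn h
    | Df.atom (Atm.at_ _), _, h => Exec.inn h
    | Df.imp g Atm.bot, _, h => fun Q hQ hg =>
        Exec.clause (InClos.mono' hQ h) (Force_toFml_exec g hg)
    | Df.imp g (Atm.at_ _), _, h => fun Q hQ hg =>
        Exec.clause (InClos.mono' hQ h) (Force_toFml_exec g hg)
    | Df.and d₁ d₂, _, h => ⟨inClos_force d₁ (InClos.andl h), inClos_force d₂ (InClos.andr h)⟩
end

/-- the hHLP operational semantics is complete for the hereditary
Harrop fragment of IPL: if `P ▷ G` is derivable in NJ then `P ⊢ G` has a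
successful execution. -/
theorem hHLP_complete_NJ (P : Program) (G : Gf) (h : NJ (Df.toFml '' ↑P) G.toFml) :
    Exec P G := by
  refine Force_toFml_exec G (NJ_sound h P ?_)
  rintro γ ⟨d, hd, rfl⟩
  exact inClos_force d (InClos.mem hd)
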